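/- arXiv:1907.08675 — 2 statements merged into one kernel-verified Lean document; each statement's English description precedes it below -/
import Mathlib

section
/- Let K_{SP} be a generalized number lattice on the disjoint union S ⊎ P. Then (K_{SP} ∘ S)^d = K_{SP}^d × S and (K_{SP} × S)^d = K_{SP}^d ∘ S, where K_{SP} ∘ S := { f_S : (f_S, f_P) ∈ K_{SP} for some f_P } is the restriction and K_{SP} × S := { f_S : (f_S, 0_P) ∈ K_{SP} } is the contraction. -/
/-- A generalized number lattice. -/
def IsGenNumLat {M : Type*} [AddCommGroup M] [Module ℚ M] (K : Set M) : Prop :=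
  ∃ (n k : ℕ) (b : Fin n → M) (c : Fin k → M),
    K = {x | ∃ (l : Fin n → ℤ) (m : Fin k → ℚ),
      x = (∑ i, (l i : ℚ) • b i) + ∑ j, m j • c j}

/-- The dual of a collection of vectors on a single index set. -/
def dualLat {X : Type*} [Fintype X] (K : Set (X → ℚ)) : Set (X → ℚ) :=
  {g | ∀ f ∈ K, ∃ z : ℤ, ∑ x, f x * g x = (z : ℚ)}

/-- The dual of a collection of vectors on a disjoint union `S ⊎ P`,
represented as pairs. -/
def dualLat2 {A B : Type*} [Fintype A] [Fintype B]
    (K : Set ((A → ℚ) × (B → ℚ))) : Set ((A → ℚ) × (B → ℚ)) :=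
  {g | ∀ f ∈ K, ∃ z : ℤ, (∑ a, f.1 a * g.1 a) + ∑ b, f.2 b * g.2 b = (z : ℚ)}

/-!
Restriction is formal. For the contraction, let `g_S` pair integrally with every `f_S` such that
`(f_S, 0) ∈ K`, and let `μ f = ⟨f_S, g_S⟩`. We need a functional `σ` on the `P`-coordinates with
`μ + σ ∘ π_P` integral on `K`. Write `K = ℤ⟨b⟩ + ℚ⟨c⟩`. Integrality of `μ` on `K ∩ ker π_P` says
that `-μ` induces a character `π_P K → ℚ/ℤ`, which is genuinely `ℚ`-linear on `π_P ℚ⟨c⟩` (a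
`ℚ`-linear map with integral values on a subspace vanishes there). Extend that linear part to a
functional `ρ`; what is left is a character modulo `ℤ` of the finitely generated ℤ-module spanned
by the `π_P b_i` modulo `π_P ℚ⟨c⟩`. That module is torsion free, hence free, so the character lifts
to a `ℤ`-linear map to `ℚ`, and a `ℤ`-basis of it is `ℚ`-linearly independent, so this map
extends `ℚ`-linearly.
-/

open LinearMap

theorem LinearMap.exists_comp_eq_of_ker_le {K V W U : Type*} [Field K] [AddCommGroup V]
    [Module K V] [AddCommGroup W] [Module K W] [AddCommGroup U] [Module K U]
    (f : V →ₗ[K] W) (g : V →ₗ[K] U) (h : ker f ≤ ker g) : ∃ g' : W →ₗ[K] U, g' ∘ₗ f = g := by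
  obtain ⟨l, hl⟩ := ((ker f).liftQ f le_rfl).exists_leftInverse_of_injective
    (Submodule.ker_liftQ_eq_bot _ _ _ le_rfl)
  refine ⟨(ker f).liftQ g h ∘ₗ l, LinearMap.ext fun v => ?_⟩
  have hv : l (f v) = (ker f).mkQ v := LinearMap.congr_fun hl ((ker f).mkQ v)
  simp [hv]

theorem LinearIndependent.exists_linearMap_apply_eq {K V U ι : Type*} [Field K] [AddCommGroup V]
    [Module K V] [AddCommGroup U] [Module K U] [Fintype ι] {e : ι → V}
    (he : LinearIndependent K e) (w : ι → U) : ∃ σ : V →ₗ[K] U, ∀ i, σ (e i) = w i := by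
  classical
  obtain ⟨σ, hσ⟩ := (Fintype.linearCombination K e).exists_comp_eq_of_ker_le
    (Fintype.linearCombination K w) (by
      rw [LinearMap.ker_eq_bot.mpr he.fintypeLinearCombination_injective]; exact bot_le)
  exact ⟨σ, fun i => by simpa using LinearMap.congr_fun hσ (Pi.single i 1)⟩

theorem Rat.eq_zero_of_forall_mul_eq_intCast {q : ℚ} (h : ∀ r : ℚ, ∃ z : ℤ, r * q = z) :
    q = 0 := by
  by_contra hq
  obtain ⟨z, hz⟩ := h (2 * q)⁻¹
  have h2z : ((2 * z : ℤ) : ℚ) = 1 := by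
    push_cast; rw [← hz]; field_simp
  have := Int.cast_eq_one.mp h2z
  omega

instance Module.IsTorsionFree.int_of_rat {V : Type*} [AddCommGroup V] [Module ℚ V] :
    Module.IsTorsionFree ℤ V :=
  .trans_faithfulSMul ℤ ℚ V

theorem Submodule.exists_rat_linearMap_extend {V : Type*} [AddCommGroup V] [Module ℚ V]
    (M : Submodule ℤ V) [Module.Finite ℤ M] (f : M →ₗ[ℤ] ℚ) :
    ∃ σ : V →ₗ[ℚ] ℚ, ∀ m : M, σ m = f m := by
  let e := Module.Free.chooseBasis ℤ M
  have he : LinearIndependent ℚ (fun i => (e i : V)) :=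
    (LinearIndependent.iff_fractionRing ℤ ℚ).mp (e.linearIndependent.map' M.subtype M.ker_subtype)
  obtain ⟨σ, hσ⟩ := he.exists_linearMap_apply_eq (fun i => f (e i))
  have hσf : (σ.restrictScalars ℤ) ∘ₗ M.subtype = f := e.ext hσ
  exact ⟨σ, LinearMap.congr_fun hσf⟩

theorem LinearMap.exists_rat_lift_mod_int {N V : Type*} [AddCommGroup N] [Module.Finite ℤ N]
    [AddCommGroup V] [Module ℚ V] (L : N →ₗ[ℤ] V) (T : N →ₗ[ℤ] ℚ)
    (h : ∀ n, L n = 0 → ∃ z : ℤ, T n = z) :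
    ∃ σ : V →ₗ[ℚ] ℚ, ∀ n, ∃ z : ℤ, σ (L n) = T n + z := by
  -- `range L` is free, so `L` has a section `s` over it; `n - s (L n)` lies in `ker L`.
  obtain ⟨s, hs⟩ := Module.projective_lifting_property L.rangeRestrict LinearMap.id
    L.surjective_rangeRestrict
  obtain ⟨σ, hσ⟩ := (range L).exists_rat_linearMap_extend (T ∘ₗ s)
  refine ⟨σ, fun n => ?_⟩
  have hLs (m : range L) : L (s m) = m := congrArg Subtype.val (LinearMap.congr_fun hs m)
  obtain ⟨z, hz⟩ := h (n - s (L.rangeRestrict n)) (by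
    rw [map_sub, hLs]; exact sub_self _)
  have hσn : σ (L n) = T (s (L.rangeRestrict n)) := hσ (L.rangeRestrict n)
  rw [map_sub] at hz
  exact ⟨-z, by push_cast; linarith⟩

theorem LinearMap.exists_rat_lift_mod_int_and_eq {N W V : Type*} [AddCommGroup N]
    [Module.Finite ℤ N] [AddCommGroup W] [Module ℚ W] [AddCommGroup V] [Module ℚ V]
    (L : N →ₗ[ℤ] V) (C : W →ₗ[ℚ] V) (T : N →ₗ[ℤ] ℚ) (R : W →ₗ[ℚ] ℚ)
    (h : ∀ n w, L n + C w = 0 → ∃ z : ℤ, T n + R w = z) :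
    ∃ σ : V →ₗ[ℚ] ℚ, σ ∘ₗ C = R ∧ ∀ n, ∃ z : ℤ, σ (L n) = T n + z := by
  obtain ⟨ρ, hρ⟩ := C.exists_comp_eq_of_ker_le R fun w hw => by
    refine Rat.eq_zero_of_forall_mul_eq_intCast fun r => ?_
    obtain ⟨z, hz⟩ := h 0 (r • w) (by simp_all)
    exact ⟨z, by simpa using hz⟩
  have hρC (w : W) : ρ (C w) = R w := LinearMap.congr_fun hρ w
  let q := (range C).mkQ
  obtain ⟨σ, hσ⟩ := LinearMap.exists_rat_lift_mod_int (q.restrictScalars ℤ ∘ₗ L)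
    (T - ρ.restrictScalars ℤ ∘ₗ L) fun n hn => by
      obtain ⟨w, hw⟩ : L n ∈ range C := (Submodule.Quotient.mk_eq_zero _).mp hn
      obtain ⟨z, hz⟩ := h n (-w) (by rw [map_neg, hw, add_neg_cancel])
      refine ⟨z, ?_⟩
      simp only [LinearMap.sub_apply, LinearMap.comp_apply, LinearMap.restrictScalars_apply,
        ← hw, hρC]
      linarith [map_neg R w]
  refine ⟨ρ + σ ∘ₗ q, LinearMap.ext fun w => ?_, fun n => ?_⟩
  · have hqC : q (C w) = 0 := (Submodule.Quotient.mk_eq_zero _).mpr ⟨w, rfl⟩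
    simp [hqC, hρC]
  · obtain ⟨z, hz⟩ := hσ n
    refine ⟨z, ?_⟩
    simp only [LinearMap.comp_apply, LinearMap.sub_apply, LinearMap.restrictScalars_apply] at hz
    simp only [LinearMap.add_apply, LinearMap.comp_apply, hz]
    ring

theorem IsGenNumLat.exists_add_comp_eq_intCast {E F : Type*} [AddCommGroup E] [Module ℚ E]
    [AddCommGroup F] [Module ℚ F] {K : Set E} (hK : IsGenNumLat K) (φ : E →ₗ[ℚ] F)
    (μ : E →ₗ[ℚ] ℚ) (hμ : ∀ x ∈ K, φ x = 0 → ∃ z : ℤ, μ x = z) :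
    ∃ σ : F →ₗ[ℚ] ℚ, ∀ x ∈ K, ∃ z : ℤ, μ x + σ (φ x) = z := by
  obtain ⟨n, k, b, c, rfl⟩ := hK
  let B := Fintype.linearCombination ℤ b
  let C := Fintype.linearCombination ℚ c
  have hB (l : Fin n → ℤ) : B l = ∑ i, (l i : ℚ) • b i := by
    simp [B, Fintype.linearCombination_apply, Int.cast_smul_eq_zsmul]
  have hC (m : Fin k → ℚ) : C m = ∑ j, m j • c j := rfl
  obtain ⟨σ, hσC, hσB⟩ := LinearMap.exists_rat_lift_mod_int_and_eq (φ.restrictScalars ℤ ∘ₗ B)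
    (φ ∘ₗ C) (-(μ.restrictScalars ℤ ∘ₗ B)) (-(μ ∘ₗ C)) fun l m hlm => by
      obtain ⟨z, hz⟩ := hμ (B l + C m) ⟨l, m, by rw [hB, hC]⟩ (by simpa using hlm)
      exact ⟨-z, by simp [← hz, add_comm]⟩
  refine ⟨σ, ?_⟩
  rintro _ ⟨l, m, rfl⟩
  obtain ⟨z, hz⟩ := hσB l
  have hσm : σ (φ (C m)) = -μ (C m) := by simpa using LinearMap.congr_fun hσC m
  refine ⟨z, ?_⟩
  simp only [LinearMap.comp_apply, LinearMap.neg_apply, LinearMap.restrictScalars_apply] at hz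
  rw [← hB, ← hC, map_add, map_add, map_add, hz, hσm]
  ring

theorem dualLat_restriction_eq {S P : Type*} [Fintype S] [Fintype P]
    (K : Set ((S → ℚ) × (P → ℚ))) :
    dualLat {fS | ∃ fP, (fS, fP) ∈ K} = {fS | (fS, 0) ∈ dualLat2 K} := by
  ext gS
  simp [dualLat, dualLat2]

theorem dualLat_contraction_eq {S P : Type*} [Fintype S] [Fintype P]
    {K : Set ((S → ℚ) × (P → ℚ))} (hK : IsGenNumLat K) :
    dualLat {fS | (fS, 0) ∈ K} = {fS | ∃ fP, (fS, fP) ∈ dualLat2 K} := by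
  refine subset_antisymm (fun gS hgS => ?_) fun gS ⟨gP, hg⟩ fS hfS => by simpa using hg _ hfS
  classical
  obtain ⟨σ, hσ⟩ := hK.exists_add_comp_eq_intCast (LinearMap.snd ℚ _ _)
    (Fintype.linearCombination ℚ gS ∘ₗ LinearMap.fst ℚ _ _) fun x hx hx2 =>
      hgS x.1 (by rwa [← hx2])
  refine ⟨fun p => σ (Pi.single p 1), fun f hf => ?_⟩
  obtain ⟨z, hz⟩ := hσ f hf
  refine ⟨z, ?_⟩
  rw [← hz]
  simp only [LinearMap.comp_apply, LinearMap.fst_apply, LinearMap.snd_apply,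
    Fintype.linearCombination_apply, smul_eq_mul]
  conv_rhs => rw [pi_eq_sum_univ' f.2, map_sum]
  simp

theorem stmt5 {S P : Type*} [Fintype S] [Fintype P]
    (K : Set ((S → ℚ) × (P → ℚ))) (hK : IsGenNumLat K) :
    -- (K ∘ S)ᵈ = Kᵈ × S
    dualLat {fS | ∃ fP, (fS, fP) ∈ K} = {fS | (fS, 0) ∈ dualLat2 K} ∧
    -- (K × S)ᵈ = Kᵈ ∘ S
    dualLat {fS | (fS, 0) ∈ K} = {fS | ∃ fP, (fS, fP) ∈ dualLat2 K} :=
  ⟨dualLat_restriction_eq K, dualLat_contraction_eq hK⟩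
end

section
/- Let S, P, Q be pairwise disjoint finite sets and let K_{SP}, K_{PQ} be generalized number lattices on S ⊎ P and P ⊎ Q. Then the matched composition K_{SP} ↔ K_{PQ} := { (f_S, g_Q) : ∃ h_P, (f_S, h_P) ∈ K_{SP} and (h_P, g_Q) ∈ K_{PQ} } is a generalized number lattice on S ⊎ Q. -/
open Submodule

section

variable {M N O : Type*} [AddCommGroup M] [Module ℚ M] [AddCommGroup N] [Module ℚ N]
  [AddCommGroup O] [Module ℚ O]

theorem coe_span_sup_span_restrictScalars {n k : ℕ} (b : Fin n → M) (c : Fin k → M) :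
    ((span ℤ (Set.range b) ⊔ (span ℚ (Set.range c)).restrictScalars ℤ : Submodule ℤ M) : Set M)
      = {x | ∃ (l : Fin n → ℤ) (m : Fin k → ℚ), x = (∑ i, (l i : ℚ) • b i) + ∑ j, m j • c j} := by
  ext x
  simp only [SetLike.mem_coe, mem_sup, restrictScalars_mem, mem_span_range_iff_exists_fun,
    Int.cast_smul_eq_zsmul, Set.mem_ofPred_eq]
  constructor
  · rintro ⟨_, ⟨l, rfl⟩, _, ⟨m, rfl⟩, rfl⟩
    exact ⟨l, m, rfl⟩
  · rintro ⟨l, m, rfl⟩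
    exact ⟨_, ⟨l, rfl⟩, _, ⟨m, rfl⟩, rfl⟩

theorem isGenNumLat_iff {K : Set M} :
    IsGenNumLat K ↔ ∃ (L : Submodule ℤ M) (W : Submodule ℚ M), L.FG ∧ W.FG ∧
      K = ↑(L ⊔ W.restrictScalars ℤ) := by
  constructor
  · rintro ⟨n, k, b, c, rfl⟩
    exact ⟨_, _, fg_span (Set.finite_range b), fg_span (Set.finite_range c),
      (coe_span_sup_span_restrictScalars b c).symm⟩
  · rintro ⟨L, W, hL, hW, rfl⟩
    obtain ⟨n, b, rfl⟩ := fg_iff_exists_fin_generating_family.mp hL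
    obtain ⟨k, c, rfl⟩ := fg_iff_exists_fin_generating_family.mp hW
    exact ⟨n, k, b, c, coe_span_sup_span_restrictScalars b c⟩

theorem exists_fg_sup_restrictScalars_inf_eq {L : Submodule ℤ M} (hL : L.FG)
    (W U : Submodule ℚ M) : ∃ L' : Submodule ℤ M, L'.FG ∧
      (L ⊔ W.restrictScalars ℤ) ⊓ U.restrictScalars ℤ = L' ⊔ (W ⊓ U).restrictScalars ℤ := by
  obtain ⟨s, hspan⟩ := hL.of_le (inf_le_left : L ⊓ (U ⊔ W).restrictScalars ℤ ≤ L)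
  have hs : ∀ a ∈ s, a ∈ L ∧ ∃ u ∈ U, a - u ∈ W := by
    intro a ha
    have ha' : a ∈ L ⊓ (U ⊔ W).restrictScalars ℤ := hspan ▸ subset_span ha
    obtain ⟨u, hu, w, hw, rfl⟩ := mem_sup.mp ha'.2
    exact ⟨ha'.1, u, hu, by simpa using hw⟩
  choose! hsL u hu hsW using hs
  refine ⟨span ℤ (u '' s), fg_span (s.finite_toSet.image u), le_antisymm ?_ ?_⟩
  · rintro x ⟨hx, hxU⟩
    obtain ⟨l, hl, w, hw, rfl⟩ := mem_sup.mp hx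
    have hlA : l ∈ span ℤ (s : Set M) := by
      rw [hspan]
      refine ⟨hl, ?_⟩
      rw [← add_sub_cancel_right l w]
      exact sub_mem (mem_sup_left hxU) (mem_sup_right hw)
    have hsplit : span ℤ (s : Set M) ≤ span ℤ (u '' s) ⊔ W.restrictScalars ℤ :=
      span_le.mpr fun a ha => mem_sup.mpr
        ⟨u a, subset_span (Set.mem_image_of_mem u ha), a - u a, hsW a ha, by abel⟩
    have hL'U : span ℤ (u '' s) ≤ U.restrictScalars ℤ :=
      span_le.mpr (Set.image_subset_iff.mpr hu)
    obtain ⟨l', hl', w', hw', hsum⟩ := mem_sup.mp (hsplit hlA)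
    refine mem_sup.mpr ⟨l', hl', w' + w, ⟨add_mem hw' hw, ?_⟩, by rw [← hsum]; abel⟩
    have : w' + w = l + w - l' := by rw [← hsum]; abel
    exact this ▸ sub_mem hxU (hL'U hl')
  · refine sup_le (span_le.mpr ?_) fun x hx => ⟨mem_sup_right hx.1, hx.2⟩
    rintro _ ⟨a, ha, rfl⟩
    refine ⟨?_, hu a ha⟩
    have : u a = a - (a - u a) := by abel
    exact this ▸ sub_mem (mem_sup_left (hsL a ha)) (mem_sup_right (hsW a ha))

theorem IsGenNumLat.inter_submodule {K : Set M} (hK : IsGenNumLat K) (U : Submodule ℚ M) :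
    IsGenNumLat (K ∩ U) := by
  obtain ⟨L, W, hL, hW, rfl⟩ := isGenNumLat_iff.mp hK
  obtain ⟨L', hL', heq⟩ := exists_fg_sup_restrictScalars_inf_eq hL W U
  refine isGenNumLat_iff.mpr ⟨L', W ⊓ U, hL', hW.of_le inf_le_left, ?_⟩
  rw [← heq]
  rfl

theorem IsGenNumLat.image {K : Set M} (hK : IsGenNumLat K) (f : M →ₗ[ℚ] N) :
    IsGenNumLat (f '' K) := by
  obtain ⟨L, W, hL, hW, rfl⟩ := isGenNumLat_iff.mp hK
  refine isGenNumLat_iff.mpr ⟨L.map (f.restrictScalars ℤ), W.map f, hL.map _, hW.map _, ?_⟩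
  have hWf : (W.map f).restrictScalars ℤ = (W.restrictScalars ℤ).map (f.restrictScalars ℤ) := rfl
  rw [hWf, ← Submodule.map_sup]
  exact (map_coe (f.restrictScalars ℤ) _).symm

theorem IsGenNumLat.prod {K : Set M} {K' : Set N} (hK : IsGenNumLat K) (hK' : IsGenNumLat K') :
    IsGenNumLat (K ×ˢ K') := by
  obtain ⟨L, W, hL, hW, rfl⟩ := isGenNumLat_iff.mp hK
  obtain ⟨L', W', hL', hW', rfl⟩ := isGenNumLat_iff.mp hK'
  refine isGenNumLat_iff.mpr ⟨L.prod L', W.prod W', hL.prod hL', hW.prod hW', ?_⟩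
  rw [← prod_coe, ← prod_sup_prod]
  rfl

/-- The matched composition `K₁ ↔ K₂`. -/
def matchedComp (K₁ : Set (M × N)) (K₂ : Set (N × O)) : Set (M × O) :=
  {x | ∃ h, (x.1, h) ∈ K₁ ∧ (h, x.2) ∈ K₂}

theorem matchedComp_eq_image (K₁ : Set (M × N)) (K₂ : Set (N × O)) :
    matchedComp K₁ K₂ = ((LinearMap.fst ℚ M N).comp (LinearMap.fst ℚ _ _)).prod
        ((LinearMap.snd ℚ N O).comp (LinearMap.snd ℚ _ _)) ''
      (K₁ ×ˢ K₂ ∩ LinearMap.ker ((LinearMap.snd ℚ M N).comp (LinearMap.fst ℚ _ _)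
        - (LinearMap.fst ℚ N O).comp (LinearMap.snd ℚ _ _))) := by
  ext ⟨m, o⟩
  constructor
  · rintro ⟨h, h₁, h₂⟩
    exact ⟨((m, h), (h, o)), ⟨⟨h₁, h₂⟩, sub_self h⟩, rfl⟩
  · rintro ⟨⟨⟨m, h⟩, ⟨h', o⟩⟩, ⟨⟨h₁, h₂⟩, hmatch⟩, hx⟩
    obtain rfl : h = h' := sub_eq_zero.mp hmatch
    cases hx
    exact ⟨h, h₁, h₂⟩

theorem IsGenNumLat.matchedComp {K₁ : Set (M × N)} {K₂ : Set (N × O)} (h₁ : IsGenNumLat K₁)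
    (h₂ : IsGenNumLat K₂) : IsGenNumLat (matchedComp K₁ K₂) := by
  rw [matchedComp_eq_image]
  exact ((h₁.prod h₂).inter_submodule _).image _

end

theorem stmt6 {S P Q : Type*}
    (KSP : Set ((S → ℚ) × (P → ℚ))) (KPQ : Set ((P → ℚ) × (Q → ℚ)))
    (h1 : IsGenNumLat KSP) (h2 : IsGenNumLat KPQ) :
    IsGenNumLat {x : (S → ℚ) × (Q → ℚ) |
      ∃ h : P → ℚ, (x.1, h) ∈ KSP ∧ (h, x.2) ∈ KPQ} :=
  h1.matchedComp h2
end
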